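/- Average Rate–WMMSE relationship: let M ≥ 1, and for each sample m = 1, …, M let a_m ∈ ℂ and I_m > 0 be given, with T_m = I_m + |a_m|² and ε_m(g) = |g|²·T_m − 2·Re(g·a_m) + 1. Then the infimum over all tuples (w_1, …, w_M) ∈ (0, ∞)^M and (g_1, …, g_M) ∈ ℂ^M of the sample average (1/M)·∑_{m=1}^{M} (w_m·ε_m(g_m) − ln w_m) equals 1 − (1/M)·∑_{m=1}^{M} ln(1 + |a_m|²/I_m), and this infimum is attained at g_m* = conj(a_m)/T_m and w_m* = T_m/I_m for each m. -/

import Mathlib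

/-!
Writing `T = I + |a|²`, completing the square gives `T · ε(g) = |T g − conj a|² + I`, so the
MSE is at least `x = I / T`, with equality at `g = conj a / T`. Then `w · x − ln w ≥ 1 + ln x`
(which is `ln y ≤ y − 1` at `y = w x`) is tight at `w = 1 / x = T / I`, so each summand is at least
`1 − ln (T / I) = 1 − ln (1 + |a|² / I)`, with equality at the stated point.
-/

open Real Finset ComplexConjugate

theorem Real.one_add_log_le_mul_sub_log {w x : ℝ} (hw : 0 < w) (hx : 0 < x) :
    1 + log x ≤ w * x - log w := by
  have h := log_le_sub_one_of_pos (mul_pos hw hx)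
  rw [log_mul hw.ne' hx.ne'] at h
  linarith

theorem Fin.one_div_mul_sum_const_sub {n : ℕ} (hn : n ≠ 0) (c : ℝ) (f : Fin n → ℝ) :
    1 / (n : ℝ) * ∑ i, (c - f i) = c - 1 / (n : ℝ) * ∑ i, f i := by
  rw [sum_sub_distrib, sum_const, nsmul_eq_mul, mul_sub, one_div,
    inv_mul_cancel_left₀ (Nat.cast_ne_zero.mpr hn)]

namespace WMMSE

/-- The MSE `ε(g)` of the equalizer `g`; `T = I + |a|²` is the total received power. -/
noncomputable def mse (T : ℝ) (a g : ℂ) : ℝ := ‖g‖ ^ 2 * T - 2 * (g * a).re + 1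

theorem mul_mse_eq (T : ℝ) (a g : ℂ) :
    T * mse T a g = ‖(T : ℂ) * g - conj a‖ ^ 2 + (T - ‖a‖ ^ 2) := by
  simp only [mse, Complex.sq_norm, Complex.normSq_apply, Complex.mul_re, Complex.mul_im,
    Complex.sub_re, Complex.sub_im, Complex.ofReal_re, Complex.ofReal_im, Complex.conj_re,
    Complex.conj_im]
  ring

theorem sub_div_le_mse {T : ℝ} (hT : 0 < T) (a g : ℂ) : (T - ‖a‖ ^ 2) / T ≤ mse T a g := by
  rw [div_le_iff₀' hT, mul_mse_eq]
  exact le_add_of_nonneg_left (sq_nonneg _)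

theorem mse_conj_div {T : ℝ} (hT : T ≠ 0) (a : ℂ) :
    mse T a (conj a / T) = (T - ‖a‖ ^ 2) / T := by
  rw [eq_div_iff hT, mul_comm, mul_mse_eq, mul_div_cancel₀ _ (Complex.ofReal_ne_zero.mpr hT),
    sub_self, norm_zero]
  ring

theorem one_sub_log_le_mul_mse_sub_log {I w : ℝ} (hI : 0 < I) (hw : 0 < w) (a g : ℂ) :
    1 - log (1 + ‖a‖ ^ 2 / I) ≤ w * mse (I + ‖a‖ ^ 2) a g - log w := by
  have hT : 0 < I + ‖a‖ ^ 2 := by positivity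
  have hmse := sub_div_le_mse hT a g
  rw [add_sub_cancel_right] at hmse
  calc 1 - log (1 + ‖a‖ ^ 2 / I) = 1 + log (I / (I + ‖a‖ ^ 2)) := by
        rw [log_div hI.ne' hT.ne', one_add_div hI.ne', log_div hT.ne' hI.ne']
        ring
    _ ≤ w * (I / (I + ‖a‖ ^ 2)) - log w := one_add_log_le_mul_sub_log hw (div_pos hI hT)
    _ ≤ w * mse (I + ‖a‖ ^ 2) a g - log w := by gcongr

theorem mul_mse_conj_div_sub_log {I : ℝ} (hI : 0 < I) (a : ℂ) :
    (I + ‖a‖ ^ 2) / I * mse (I + ‖a‖ ^ 2) a (conj a / ((I + ‖a‖ ^ 2 : ℝ) : ℂ))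
        - log ((I + ‖a‖ ^ 2) / I) = 1 - log (1 + ‖a‖ ^ 2 / I) := by
  have hT : 0 < I + ‖a‖ ^ 2 := by positivity
  have hcancel : (I + ‖a‖ ^ 2) / I * (I / (I + ‖a‖ ^ 2)) = 1 := by field_simp
  rw [mse_conj_div hT.ne', add_sub_cancel_right, hcancel, one_add_div hI.ne']

end WMMSE

open WMMSE in
/-- **Average Rate–WMMSE relationship.** For samples
`m = 1, …, M` with effective channels `a m ∈ ℂ`, interference-plus-noise powers
`I m > 0`, `T m = I m + |a m|²` and MSEs `ε m g = |g|² T m − 2 Re(g a m) + 1`,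
the infimum over `(w₁,…,w_M) ∈ (0,∞)^M` and `(g₁,…,g_M) ∈ ℂ^M` of
`(1/M) ∑_m (w_m ε_m(g_m) − ln w_m)` equals
`1 − (1/M) ∑_m ln(1 + |a_m|²/I_m)`, attained at `g_m* = conj(a_m)/T_m`,
`w_m* = T_m/I_m`. -/
theorem average_rate_wmmse
    (M : ℕ) (hM : 1 ≤ M) (a : Fin M → ℂ) (I : Fin M → ℝ) (hI : ∀ m, 0 < I m)
    (T : Fin M → ℝ) (hT : ∀ m, T m = I m + ‖a m‖ ^ 2)
    (ε : Fin M → ℂ → ℝ)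
    (hε : ∀ m (g : ℂ), ε m g = ‖g‖ ^ 2 * T m - 2 * (g * a m).re + 1) :
    IsLeast {y : ℝ | ∃ w : Fin M → ℝ, ∃ g : Fin M → ℂ, (∀ m, 0 < w m) ∧
        y = (1 / (M : ℝ)) * ∑ m, (w m * ε m (g m) - Real.log (w m))}
      (1 - (1 / (M : ℝ)) * ∑ m, Real.log (1 + ‖a m‖ ^ 2 / I m)) ∧
    (1 / (M : ℝ)) * ∑ m,
        (T m / I m * ε m (starRingEnd ℂ (a m) / (T m : ℂ)) - Real.log (T m / I m))
      = 1 - (1 / (M : ℝ)) * ∑ m, Real.log (1 + ‖a m‖ ^ 2 / I m) := by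
  obtain rfl : T = fun m => I m + ‖a m‖ ^ 2 := funext hT
  obtain rfl : ε = fun m => mse (I m + ‖a m‖ ^ 2) (a m) := funext fun m => funext (hε m)
  beta_reduce
  have hM0 : M ≠ 0 := Nat.one_le_iff_ne_zero.mp hM
  have hopt : 1 / (M : ℝ) * ∑ m, ((I m + ‖a m‖ ^ 2) / I m *
      mse (I m + ‖a m‖ ^ 2) (a m) (conj (a m) / ((I m + ‖a m‖ ^ 2 : ℝ) : ℂ))
        - log ((I m + ‖a m‖ ^ 2) / I m)) = 1 - 1 / (M : ℝ) * ∑ m, log (1 + ‖a m‖ ^ 2 / I m) := by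
    simp only [mul_mse_conj_div_sub_log (hI _)]
    exact Fin.one_div_mul_sum_const_sub hM0 _ _
  have hw_opt m : 0 < (I m + ‖a m‖ ^ 2) / I m :=
    div_pos (add_pos_of_pos_of_nonneg (hI m) (sq_nonneg _)) (hI m)
  refine ⟨⟨⟨_, _, hw_opt, hopt.symm⟩, ?_⟩, hopt⟩
  rintro y ⟨w, g, hw, rfl⟩
  rw [← Fin.one_div_mul_sum_const_sub hM0]
  exact mul_le_mul_of_nonneg_left (sum_le_sum fun m _ =>
    one_sub_log_le_mul_mse_sub_log (hI m) (hw m) (a m) (g m)) (by positivity)
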